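/- Let A : ℕ → ℕ → ℂ satisfy the bound Σ_{m² n ≤ M} |A(m,n)|² ≤ C_ε M^{1+ε} and Σ_{m² n ≤ M} |A(n,m)|² ≤ C_ε M^{1+ε} for all M ≥ 1, together with the Hecke-type relation A(n₁, n₂) = Σ_{d ∣ gcd(n₁,n₂)} μ(d)·A(n₁/d, 1)·A(1, n₂/d). Then Σ_{n₁ ≤ N₁} Σ_{n₂ ≤ N₂} |A(n₁,n₂)|² ≪_ε (N₁ N₂)^{1+2ε} for all N₁, N₂ ≥ 1. -/

import Mathlib

/-!
By the Hecke relation, `|μ| ≤ 1` and Cauchy–Schwarz over the common divisors of `n₁, n₂`,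
`|A(n₁,n₂)|² ≤ (∑_{d ∣ n₁} |A(d,1)|²) (∑_{d ∣ n₂} |A(1,d)|²)`, so the double sum is at most a
product of two one-variable divisor sums. Swapping the order of summation,
`∑_{n ≤ N} ∑_{d ∣ n} |A(d,1)|² = ∑_{d ≤ N} ∑_{e ≤ N/d} |A(e,1)|²`, and the `m = 1` slice of the
Rankin–Selberg bound gives `≤ C ∑_d (N/d)^{1+ε} ≤ C ζ(1+ε) N^{1+ε}`.
-/

open Finset ArithmeticFunction
open scoped ArithmeticFunction.Moebius

theorem sum_Icc_sum_divisors_eq_sum_Icc_sum_Icc_div {R : Type*} [Semiring R] (c : ℕ → R) (N : ℕ) :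
    ∑ n ∈ Icc 1 N, ∑ d ∈ n.divisors, c d = ∑ d ∈ Icc 1 N, ∑ e ∈ Icc 1 (N / d), c e := by
  let f : ArithmeticFunction R := ⟨fun n => if n = 0 then 0 else c n, if_pos rfl⟩
  have hf : ∀ s : Finset ℕ, (∀ n ∈ s, 0 < n) → ∑ n ∈ s, f n = ∑ n ∈ s, c n :=
    fun s hs => sum_congr rfl fun n hn => if_neg (hs n hn).ne'
  have key := sum_Ioc_mul_eq_sum_sum (zeta : ArithmeticFunction R) f N
  simp only [coe_zeta_mul_apply, ← Icc_add_one_left_eq_Ioc, zero_add] at key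
  convert key using 2 with n - n hn
  · exact (hf _ fun d hd => Nat.pos_of_mem_divisors hd).symm
  · rw [natCoe_apply, zeta_apply, if_neg (Nat.one_le_iff_ne_zero.1 (mem_Icc.1 hn).1),
      Nat.cast_one, one_mul]
    exact (hf _ fun e he => (mem_Icc.1 he).1).symm

theorem sum_Icc_sum_divisors_le {c : ℕ → ℝ} {C s : ℝ} (hC : 0 ≤ C) (hs : 1 < s)
    (hc : ∀ M, 1 ≤ M → ∑ e ∈ Icc 1 M, c e ≤ C * (M : ℝ) ^ s) (N : ℕ) :
    ∑ n ∈ Icc 1 N, ∑ d ∈ n.divisors, c d ≤ C * (∑' d : ℕ, (d : ℝ) ^ (-s)) * (N : ℝ) ^ s := by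
  have hsum : Summable fun d : ℕ => (d : ℝ) ^ (-s) := Real.summable_nat_rpow.2 (by linarith)
  have hterm : ∀ d ∈ Icc 1 N, ∑ e ∈ Icc 1 (N / d), c e ≤ C * (N : ℝ) ^ s * (d : ℝ) ^ (-s) := by
    intro d hd
    obtain ⟨hd1, hdN⟩ := mem_Icc.1 hd
    have hd0 : (0 : ℝ) < d := by exact_mod_cast hd1
    calc ∑ e ∈ Icc 1 (N / d), c e ≤ C * ((N / d : ℕ) : ℝ) ^ s :=
          hc _ ((Nat.one_le_div_iff hd1).2 hdN)
      _ ≤ C * ((N : ℝ) / d) ^ s := by gcongr; exact Nat.cast_div_le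
      _ = C * (N : ℝ) ^ s * (d : ℝ) ^ (-s) := by
        rw [Real.div_rpow (by positivity) hd0.le, Real.rpow_neg hd0.le, div_eq_mul_inv, mul_assoc]
  calc ∑ n ∈ Icc 1 N, ∑ d ∈ n.divisors, c d
      = ∑ d ∈ Icc 1 N, ∑ e ∈ Icc 1 (N / d), c e := sum_Icc_sum_divisors_eq_sum_Icc_sum_Icc_div c N
    _ ≤ ∑ d ∈ Icc 1 N, C * (N : ℝ) ^ s * (d : ℝ) ^ (-s) := sum_le_sum hterm
    _ = C * (N : ℝ) ^ s * ∑ d ∈ Icc 1 N, (d : ℝ) ^ (-s) := (mul_sum ..).symm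
    _ ≤ C * (N : ℝ) ^ s * ∑' d : ℕ, (d : ℝ) ^ (-s) := by
      gcongr
      exact hsum.sum_le_tsum _ fun d _ => by positivity
    _ = C * (∑' d : ℕ, (d : ℝ) ^ (-s)) * (N : ℝ) ^ s := by ring

theorem sum_Icc_apply_one_le_sum_ite_sq_mul_le {f : ℕ → ℕ → ℝ} (hf : 0 ≤ f) {M : ℕ} (hM : 1 ≤ M) :
    ∑ n ∈ Icc 1 M, f 1 n ≤
      ∑ m ∈ Icc 1 M, ∑ n ∈ Icc 1 M, if m ^ 2 * n ≤ M then f m n else 0 := by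
  have hrow : ∑ n ∈ Icc 1 M, f 1 n = ∑ n ∈ Icc 1 M, if 1 ^ 2 * n ≤ M then f 1 n else 0 :=
    sum_congr rfl fun n hn => by rw [one_pow, one_mul, if_pos (mem_Icc.1 hn).2]
  rw [hrow]
  refine single_le_sum (f := fun m => ∑ n ∈ Icc 1 M, if m ^ 2 * n ≤ M then f m n else 0)
    (fun m _ => sum_nonneg fun n _ => ?_) (mem_Icc.2 ⟨le_rfl, hM⟩)
  split_ifs
  exacts [hf m n, le_rfl]

theorem norm_sum_moebius_mul_le (s : Finset ℕ) (a b : ℕ → ℂ) :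
    ‖∑ d ∈ s, (μ d : ℂ) * a d * b d‖ ≤ ∑ d ∈ s, ‖a d‖ * ‖b d‖ := by
  refine (norm_sum_le _ _).trans (sum_le_sum fun d _ => ?_)
  rw [norm_mul, norm_mul, mul_assoc]
  refine mul_le_of_le_one_left (by positivity) ?_
  rw [Complex.norm_intCast]
  exact_mod_cast abs_moebius_le_one

theorem sum_divisors_div_le_of_dvd {f : ℕ → ℝ} (hf : ∀ d, 0 ≤ f d) {g n : ℕ} (hgn : g ∣ n)
    (hn : n ≠ 0) : ∑ d ∈ g.divisors, f (n / d) ≤ ∑ d ∈ n.divisors, f d := by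
  rw [← Nat.sum_div_divisors n f]
  exact sum_le_sum_of_subset_of_nonneg (Nat.divisors_subset_of_dvd hn hgn) fun d _ _ => hf _

theorem norm_sq_le_of_eq_sum_gcd_divisors {x : ℂ} {a b : ℕ → ℂ} {n₁ n₂ : ℕ} (hn₁ : n₁ ≠ 0)
    (hn₂ : n₂ ≠ 0)
    (hx : x = ∑ d ∈ (Nat.gcd n₁ n₂).divisors, (μ d : ℂ) * a (n₁ / d) * b (n₂ / d)) :
    ‖x‖ ^ 2 ≤ (∑ d ∈ n₁.divisors, ‖a d‖ ^ 2) * ∑ d ∈ n₂.divisors, ‖b d‖ ^ 2 := by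
  set g := Nat.gcd n₁ n₂
  calc ‖x‖ ^ 2 ≤ (∑ d ∈ g.divisors, ‖a (n₁ / d)‖ * ‖b (n₂ / d)‖) ^ 2 := by
        rw [hx]
        gcongr
        exact norm_sum_moebius_mul_le _ (fun d => a (n₁ / d)) fun d => b (n₂ / d)
    _ ≤ (∑ d ∈ g.divisors, ‖a (n₁ / d)‖ ^ 2) * ∑ d ∈ g.divisors, ‖b (n₂ / d)‖ ^ 2 :=
        sum_mul_sq_le_sq_mul_sq _ _ _
    _ ≤ (∑ d ∈ n₁.divisors, ‖a d‖ ^ 2) * ∑ d ∈ n₂.divisors, ‖b d‖ ^ 2 := by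
        gcongr
        · exact sum_divisors_div_le_of_dvd (f := fun d => ‖a d‖ ^ 2) (fun d => by positivity)
            (Nat.gcd_dvd_left _ _) hn₁
        · exact sum_divisors_div_le_of_dvd (f := fun d => ‖b d‖ ^ 2) (fun d => by positivity)
            (Nat.gcd_dvd_right _ _) hn₂

theorem sum_Icc_sum_Icc_norm_sq_le_of_hecke {A : ℕ → ℕ → ℂ} {C s : ℝ} (hC : 0 ≤ C) (hs : 1 < s)
    (hcol : ∀ M, 1 ≤ M → ∑ e ∈ Icc 1 M, ‖A e 1‖ ^ 2 ≤ C * (M : ℝ) ^ s)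
    (hrow : ∀ M, 1 ≤ M → ∑ e ∈ Icc 1 M, ‖A 1 e‖ ^ 2 ≤ C * (M : ℝ) ^ s)
    (hHecke : ∀ n₁ n₂ : ℕ, 1 ≤ n₁ → 1 ≤ n₂ →
      A n₁ n₂ = ∑ d ∈ (Nat.gcd n₁ n₂).divisors, (μ d : ℂ) * A (n₁ / d) 1 * A 1 (n₂ / d))
    (N₁ N₂ : ℕ) :
    ∑ n₁ ∈ Icc 1 N₁, ∑ n₂ ∈ Icc 1 N₂, ‖A n₁ n₂‖ ^ 2 ≤
      (C * ∑' d : ℕ, (d : ℝ) ^ (-s)) ^ 2 * ((N₁ : ℝ) * N₂) ^ s := by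
  set Z := ∑' d : ℕ, (d : ℝ) ^ (-s)
  calc ∑ n₁ ∈ Icc 1 N₁, ∑ n₂ ∈ Icc 1 N₂, ‖A n₁ n₂‖ ^ 2
      ≤ ∑ n₁ ∈ Icc 1 N₁, ∑ n₂ ∈ Icc 1 N₂,
          (∑ d ∈ n₁.divisors, ‖A d 1‖ ^ 2) * ∑ d ∈ n₂.divisors, ‖A 1 d‖ ^ 2 := by
        gcongr with n₁ hn₁ n₂ hn₂
        obtain ⟨hn₁, -⟩ := mem_Icc.1 hn₁
        obtain ⟨hn₂, -⟩ := mem_Icc.1 hn₂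
        exact norm_sq_le_of_eq_sum_gcd_divisors (by omega) (by omega) (hHecke n₁ n₂ hn₁ hn₂)
    _ = (∑ n₁ ∈ Icc 1 N₁, ∑ d ∈ n₁.divisors, ‖A d 1‖ ^ 2) *
          ∑ n₂ ∈ Icc 1 N₂, ∑ d ∈ n₂.divisors, ‖A 1 d‖ ^ 2 := by rw [sum_mul_sum]
    _ ≤ (C * Z * (N₁ : ℝ) ^ s) * (C * Z * (N₂ : ℝ) ^ s) := by
        gcongr
        exacts [sum_Icc_sum_divisors_le hC hs hcol N₁, sum_Icc_sum_divisors_le hC hs hrow N₂]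
    _ = (C * Z) ^ 2 * ((N₁ : ℝ) * N₂) ^ s := by
        rw [Real.mul_rpow (by positivity) (by positivity)]; ring

/-- If the coefficients `A : ℕ → ℕ → ℂ` satisfy the Rankin–Selberg type bounds
`Σ_{m²n ≤ M} |A(m,n)|² ≤ C_ε M^{1+ε}`, `Σ_{m²n ≤ M} |A(n,m)|² ≤ C_ε M^{1+ε}` and the
Hecke relation `A(n₁,n₂) = Σ_{d ∣ (n₁,n₂)} μ(d) A(n₁/d,1) A(1,n₂/d)`, then
`Σ_{n₁ ≤ N₁} Σ_{n₂ ≤ N₂} |A(n₁,n₂)|² ≪_ε (N₁N₂)^{1+2ε}`. -/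
theorem stmt9 (A : ℕ → ℕ → ℂ) (ε Cε : ℝ) (hε : 0 < ε) (hCε : 0 < Cε)
    (hRS1 : ∀ M : ℕ, 1 ≤ M →
      ∑ m ∈ Finset.Icc 1 M, ∑ n ∈ Finset.Icc 1 M,
          (if m ^ 2 * n ≤ M then ‖A m n‖ ^ 2 else 0) ≤ Cε * (M : ℝ) ^ (1 + ε))
    (hRS2 : ∀ M : ℕ, 1 ≤ M →
      ∑ m ∈ Finset.Icc 1 M, ∑ n ∈ Finset.Icc 1 M,
          (if m ^ 2 * n ≤ M then ‖A n m‖ ^ 2 else 0) ≤ Cε * (M : ℝ) ^ (1 + ε))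
    (hHecke : ∀ n₁ n₂ : ℕ, 1 ≤ n₁ → 1 ≤ n₂ →
      A n₁ n₂ = ∑ d ∈ (Nat.gcd n₁ n₂).divisors,
        (ArithmeticFunction.moebius d : ℂ) * A (n₁ / d) 1 * A 1 (n₂ / d)) :
    ∃ K : ℝ, 0 < K ∧ ∀ N₁ N₂ : ℕ, 1 ≤ N₁ → 1 ≤ N₂ →
      ∑ n₁ ∈ Finset.Icc 1 N₁, ∑ n₂ ∈ Finset.Icc 1 N₂, ‖A n₁ n₂‖ ^ 2 ≤
        K * ((N₁ : ℝ) * N₂) ^ (1 + 2 * ε) := by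
  have hs : 1 < 1 + ε := by linarith
  have hcol M (hM : 1 ≤ M) : ∑ e ∈ Icc 1 M, ‖A e 1‖ ^ 2 ≤ Cε * (M : ℝ) ^ (1 + ε) :=
    (sum_Icc_apply_one_le_sum_ite_sq_mul_le (f := fun m n => ‖A n m‖ ^ 2)
      (fun _ _ => by positivity) hM).trans (hRS2 M hM)
  have hrow M (hM : 1 ≤ M) : ∑ e ∈ Icc 1 M, ‖A 1 e‖ ^ 2 ≤ Cε * (M : ℝ) ^ (1 + ε) :=
    (sum_Icc_apply_one_le_sum_ite_sq_mul_le (f := fun m n => ‖A m n‖ ^ 2)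
      (fun _ _ => by positivity) hM).trans (hRS1 M hM)
  have hZ : 0 < ∑' d : ℕ, (d : ℝ) ^ (-(1 + ε)) :=
    (Real.summable_nat_rpow.2 (by linarith)).tsum_pos (fun d => by positivity) 1 (by norm_num)
  refine ⟨(Cε * ∑' d : ℕ, (d : ℝ) ^ (-(1 + ε))) ^ 2, by positivity, fun N₁ N₂ hN₁ hN₂ =>
    (sum_Icc_sum_Icc_norm_sq_le_of_hecke hCε.le hs hcol hrow hHecke N₁ N₂).trans ?_⟩
  have hN : (1 : ℝ) ≤ N₁ * N₂ := by exact_mod_cast Nat.one_le_iff_ne_zero.2 (by positivity)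
  exact mul_le_mul_of_nonneg_left (Real.rpow_le_rpow_of_exponent_le hN (by linarith))
    (by positivity)
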